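/- For every n ≥ 3, the single strip Sₙ is equivalent modulo the Kayles universe to a sum of strips of lengths 1 and 2: if n = 3k then Sₙ ≡ kS₁ + kS₂; if n = 3k+1 then Sₙ ≡ (k+1)S₁ + kS₂; if n = 3k+2 then Sₙ ≡ kS₁ + (k+1)S₂, where equivalence means equal misère outcomes after adding any Kayles position. -/

import Mathlib

/-- Add a strip of length `k` to a position (strips of length 0 are discarded). -/
def addStrip (m : Multiset ℕ) (k : ℕ) : Multiset ℕ := if k = 0 then m else k ::ₘ m

/-- Left removes one square from a strip of length `n ≥ 1`, leaving strips `i` and `n-1-i`. -/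
def LeftMove (G G' : Multiset ℕ) : Prop :=
  ∃ n ∈ G, ∃ i, i + 1 ≤ n ∧ G' = addStrip (addStrip (G.erase n) i) (n - 1 - i)

/-- Right removes two adjacent squares from a strip of length `n ≥ 2`, leaving `i` and `n-2-i`. -/
def RightMove (G G' : Multiset ℕ) : Prop :=
  ∃ n ∈ G, ∃ i, i + 2 ≤ n ∧ G' = addStrip (addStrip (G.erase n) i) (n - 2 - i)

mutual
  /-- Misère play: Left, to move, wins (a player unable to move wins). -/
  inductive LeftWinsMover : Multiset ℕ → Prop
    | cannot (G : Multiset ℕ) : (¬ ∃ G', LeftMove G G') → LeftWinsMover G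
    | move (G G' : Multiset ℕ) : LeftMove G G' → LeftWinsWaiter G' → LeftWinsMover G
  /-- Misère play: Left wins with Right to move. -/
  inductive LeftWinsWaiter : Multiset ℕ → Prop
    | intro (G : Multiset ℕ) : (∃ G', RightMove G G') →
        (∀ G', RightMove G G' → LeftWinsMover G') → LeftWinsWaiter G
end

inductive Outcome | L | N | P | R
  deriving DecidableEq

open Classical in
/-- The misère outcome `o⁻(G)`. -/
noncomputable def outcome (G : Multiset ℕ) : Outcome :=
  if LeftWinsMover G then (if LeftWinsWaiter G then Outcome.L else Outcome.N)
  else (if LeftWinsWaiter G then Outcome.P else Outcome.R)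

/-- The partial order on outcomes: `L` greatest, `R` least, `N` and `P` incomparable. -/
def Outcome.le (a b : Outcome) : Prop := a = b ∨ a = Outcome.R ∨ b = Outcome.L

/-- `pos k j` is the position `kS₁ + jS₂`. -/
def pos (k j : ℕ) : Multiset ℕ := Multiset.replicate k 1 + Multiset.replicate j 2

/-!
Weight a strip of length `n` by `-1`, `1` or `0` according as `n ≡ 1`, `2` or `0 (mod 3)`, and a
position by the total weight `v` of its strips. As the weight of `n` is `≡ -n (mod 3)` and at most
`1` in absolute value, a Left move changes `v` by `+1` or `-2` and a Right move by `-1` or `+2`.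
Left can always raise `v` by one unless all strips have length `0` or `2` (then splitting a `2`
lowers it by two), and Right can always lower it by one. By induction on the total length, Left
wins moving first iff `v ∈ {0, 3, 6, …}` and moving second iff `v ∈ {1, 4, 7, …}`. So the
outcome only depends on `v`, and `Sₙ` weighs as much as the claimed sum of `S₁`s and `S₂`s.
-/

def stripWeight (n : ℕ) : ℤ := if n % 3 = 1 then -1 else if n % 3 = 2 then 1 else 0

def kaylesWeight (G : Multiset ℕ) : ℤ := (G.map stripWeight).sum

@[simp] lemma stripWeight_zero : stripWeight 0 = 0 := rfl

@[simp] lemma stripWeight_one : stripWeight 1 = -1 := rfl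

@[simp] lemma stripWeight_two : stripWeight 2 = 1 := rfl

lemma stripWeight_add_add_one (a b : ℕ) :
    stripWeight a + stripWeight b = stripWeight (a + b + 1) + 1 ∨
      stripWeight a + stripWeight b = stripWeight (a + b + 1) - 2 := by
  simp only [stripWeight]; split_ifs <;> first | contradiction | omega

lemma stripWeight_add_add_two (a b : ℕ) :
    stripWeight a + stripWeight b = stripWeight (a + b + 2) - 1 ∨
      stripWeight a + stripWeight b = stripWeight (a + b + 2) + 2 := by
  simp only [stripWeight]; split_ifs <;> first | contradiction | omega

@[simp] lemma kaylesWeight_cons (n : ℕ) (G : Multiset ℕ) :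
    kaylesWeight (n ::ₘ G) = stripWeight n + kaylesWeight G := by
  simp [kaylesWeight]

@[simp] lemma kaylesWeight_add (G H : Multiset ℕ) :
    kaylesWeight (G + H) = kaylesWeight G + kaylesWeight H := by
  simp [kaylesWeight]

lemma kaylesWeight_pos (a b : ℕ) : kaylesWeight (pos a b) = b - a := by
  simp [kaylesWeight, pos, Multiset.map_replicate, sub_eq_neg_add]

lemma kaylesWeight_addStrip (G : Multiset ℕ) (k : ℕ) :
    kaylesWeight (addStrip G k) = kaylesWeight G + stripWeight k := by
  unfold addStrip
  split_ifs with hk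
  · simp [hk]
  · simp [add_comm]

lemma sum_addStrip (G : Multiset ℕ) (k : ℕ) : (addStrip G k).sum = G.sum + k := by
  unfold addStrip
  split_ifs with hk <;> simp [hk, add_comm]

section Split

variable {G : Multiset ℕ} {n : ℕ}

lemma kaylesWeight_split (hn : n ∈ G) (i j : ℕ) :
    kaylesWeight (addStrip (addStrip (G.erase n) i) j) =
      kaylesWeight G + (stripWeight i + stripWeight j - stripWeight n) := by
  conv_rhs => rw [← Multiset.cons_erase hn]
  rw [kaylesWeight_addStrip, kaylesWeight_addStrip, kaylesWeight_cons]
  ring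

lemma sum_split (hn : n ∈ G) (i j : ℕ) :
    (addStrip (addStrip (G.erase n) i) j).sum + n = G.sum + i + j := by
  conv_rhs => rw [← Multiset.cons_erase hn]
  rw [sum_addStrip, sum_addStrip, Multiset.sum_cons]
  ring

end Split

section Moves

variable {G G' : Multiset ℕ}

lemma LeftMove.sum_lt (h : LeftMove G G') : G'.sum < G.sum := by
  obtain ⟨n, hn, i, hi, rfl⟩ := h
  have := sum_split hn i (n - 1 - i)
  omega

lemma RightMove.sum_lt (h : RightMove G G') : G'.sum < G.sum := by
  obtain ⟨n, hn, i, hi, rfl⟩ := h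
  have := sum_split hn i (n - 2 - i)
  omega

lemma LeftMove.kaylesWeight_eq (h : LeftMove G G') :
    kaylesWeight G' = kaylesWeight G + 1 ∨ kaylesWeight G' = kaylesWeight G - 2 := by
  obtain ⟨n, hn, i, hi, rfl⟩ := h
  have hsplit : i + (n - 1 - i) + 1 = n := by omega
  rw [kaylesWeight_split hn]
  rcases stripWeight_add_add_one i (n - 1 - i) with h | h <;> rw [hsplit] at h <;> omega

lemma RightMove.kaylesWeight_eq (h : RightMove G G') :
    kaylesWeight G' = kaylesWeight G - 1 ∨ kaylesWeight G' = kaylesWeight G + 2 := by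
  obtain ⟨n, hn, i, hi, rfl⟩ := h
  have hsplit : i + (n - 2 - i) + 2 = n := by omega
  rw [kaylesWeight_split hn]
  rcases stripWeight_add_add_two i (n - 2 - i) with h | h <;> rw [hsplit] at h <;> omega

lemma eq_zero_of_not_exists_leftMove (h : ¬ ∃ G', LeftMove G G') : ∀ n ∈ G, n = 0 := by
  intro n hn
  by_contra hn0
  exact h ⟨_, n, hn, 0, by omega, rfl⟩

lemma not_exists_leftMove_of_eq_zero (h : ∀ n ∈ G, n = 0) : ¬ ∃ G', LeftMove G G' := by
  rintro ⟨G', n, hn, i, hi, -⟩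
  have := h n hn
  omega

lemma kaylesWeight_eq_zero_of_eq_zero (h : ∀ n ∈ G, n = 0) : kaylesWeight G = 0 :=
  Multiset.sum_eq_zero fun x hx => by
    obtain ⟨n, hn, rfl⟩ := Multiset.mem_map.mp hx
    simp [h n hn]

/-- Breaking off an end square of a strip of length `≢ 2 (mod 3)`, or the third square of one of
length `≡ 2 (mod 3)` other than `2`, raises the weight by one. -/
lemma exists_leftMove_kaylesWeight_add_one {n : ℕ} (hn : n ∈ G) (hn0 : n ≠ 0)
    (hn2 : n ≠ 2) :
    ∃ G', LeftMove G G' ∧ kaylesWeight G' = kaylesWeight G + 1 := by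
  obtain ⟨i, hi, hw⟩ :
      ∃ i, i + 1 ≤ n ∧ stripWeight i + stripWeight (n - 1 - i) = stripWeight n + 1 := by
    by_cases hmod : n % 3 = 2
    · refine ⟨2, by omega, ?_⟩
      simp only [stripWeight]; split_ifs <;> first | contradiction | omega
    · refine ⟨0, by omega, ?_⟩
      simp only [stripWeight]; split_ifs <;> first | contradiction | omega
  exact ⟨_, ⟨n, hn, i, hi, rfl⟩, by rw [kaylesWeight_split hn]; omega⟩

lemma exists_leftMove_kaylesWeight_sub_two (h2 : 2 ∈ G) :
    ∃ G', LeftMove G G' ∧ kaylesWeight G' = kaylesWeight G - 2 :=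
  ⟨_, ⟨2, h2, 0, by omega, rfl⟩, by rw [kaylesWeight_split h2]; simp [sub_eq_add_neg]⟩

lemma exists_rightMove_kaylesWeight_sub_one (h : ∃ G', RightMove G G') :
    ∃ G', RightMove G G' ∧ kaylesWeight G' = kaylesWeight G - 1 := by
  obtain ⟨-, n, hn, j, hj, -⟩ := h
  obtain ⟨i, hi, hw⟩ :
      ∃ i, i + 2 ≤ n ∧ stripWeight i + stripWeight (n - 2 - i) = stripWeight n - 1 := by
    by_cases hmod : n % 3 = 1
    · refine ⟨1, by omega, ?_⟩
      simp only [stripWeight]; split_ifs <;> first | contradiction | omega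
    · refine ⟨0, by omega, ?_⟩
      simp only [stripWeight]; split_ifs <;> first | contradiction | omega
  exact ⟨_, ⟨n, hn, i, hi, rfl⟩, by rw [kaylesWeight_split hn]; omega⟩

lemma exists_rightMove_of_kaylesWeight_pos (h : 0 < kaylesWeight G) : ∃ G', RightMove G G' := by
  obtain ⟨n, hn, hw⟩ : ∃ n ∈ G, 0 < stripWeight n := by
    by_contra! hle
    have := Multiset.sum_map_le_sum_map stripWeight (fun _ => 0) hle
    simp only [Multiset.map_const', Multiset.sum_replicate, smul_zero] at this
    exact absurd h (not_lt.mpr this)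
  have : 2 ≤ n := by
    by_contra! hn
    interval_cases n <;> simp at hw
  exact ⟨_, n, hn, 0, this, rfl⟩

lemma kaylesWeight_pos_of_two_mem (h2 : 2 ∈ G) (hG : ∀ n ∈ G, n = 0 ∨ n = 2) :
    0 < kaylesWeight G := by
  have hrest : 0 ≤ kaylesWeight (G.erase 2) :=
    Multiset.sum_nonneg fun x hx => by
      obtain ⟨n, hn, rfl⟩ := Multiset.mem_map.mp hx
      rcases hG n (Multiset.mem_of_mem_erase hn) with rfl | rfl <;> simp
  rw [← Multiset.cons_erase h2, kaylesWeight_cons]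
  simp only [stripWeight_two]
  omega

end Moves

section Outcomes

variable {G : Multiset ℕ}

lemma leftWinsMover_iff_of_leftMoves
    (ih : ∀ G', LeftMove G G' →
      (LeftWinsWaiter G' ↔ 0 ≤ kaylesWeight G' ∧ kaylesWeight G' % 3 = 1)) :
    LeftWinsMover G ↔ 0 ≤ kaylesWeight G ∧ kaylesWeight G % 3 = 0 := by
  constructor
  · rintro (⟨_, hstuck⟩ | ⟨_, G', hmove, hwin⟩)
    · simp [kaylesWeight_eq_zero_of_eq_zero (eq_zero_of_not_exists_leftMove hstuck)]
    · have := (ih G' hmove).mp hwin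
      rcases hmove.kaylesWeight_eq with h | h <;> omega
  · rintro ⟨hnonneg, hmod⟩
    by_cases hgood : ∃ n ∈ G, n ≠ 0 ∧ n ≠ 2
    · obtain ⟨n, hn, hn0, hn2⟩ := hgood
      obtain ⟨G', hmove, hw⟩ := exists_leftMove_kaylesWeight_add_one hn hn0 hn2
      exact .move G G' hmove ((ih G' hmove).mpr (by omega))
    push Not at hgood
    by_cases h2 : 2 ∈ G
    · have hpos :=
        kaylesWeight_pos_of_two_mem h2 fun n hn => (em (n = 0)).imp_right (hgood n hn)
      obtain ⟨G', hmove, hw⟩ := exists_leftMove_kaylesWeight_sub_two h2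
      exact .move G G' hmove ((ih G' hmove).mpr (by omega))
    · refine .cannot G (not_exists_leftMove_of_eq_zero fun n hn => ?_)
      by_contra hn0
      exact h2 (hgood n hn hn0 ▸ hn)

lemma leftWinsWaiter_iff_of_rightMoves
    (ih : ∀ G', RightMove G G' →
      (LeftWinsMover G' ↔ 0 ≤ kaylesWeight G' ∧ kaylesWeight G' % 3 = 0)) :
    LeftWinsWaiter G ↔ 0 ≤ kaylesWeight G ∧ kaylesWeight G % 3 = 1 := by
  constructor
  · rintro ⟨_, hcan, hwin⟩
    obtain ⟨G', hmove, hw⟩ := exists_rightMove_kaylesWeight_sub_one hcan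
    have := (ih G' hmove).mp (hwin G' hmove)
    omega
  · rintro ⟨hnonneg, hmod⟩
    refine .intro G (exists_rightMove_of_kaylesWeight_pos (by omega)) fun G' hmove => ?_
    rcases hmove.kaylesWeight_eq with h | h <;> exact (ih G' hmove).mpr (by omega)

theorem leftWins_iff (G : Multiset ℕ) :
    (LeftWinsMover G ↔ 0 ≤ kaylesWeight G ∧ kaylesWeight G % 3 = 0) ∧
      (LeftWinsWaiter G ↔ 0 ≤ kaylesWeight G ∧ kaylesWeight G % 3 = 1) := by
  induction hsum : G.sum using Nat.strong_induction_on generalizing G with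
  | _ N ih =>
    subst hsum
    exact ⟨leftWinsMover_iff_of_leftMoves fun G' h => (ih _ h.sum_lt G' rfl).2,
      leftWinsWaiter_iff_of_rightMoves fun G' h => (ih _ h.sum_lt G' rfl).1⟩

theorem outcome_eq_of_kaylesWeight_eq {G H : Multiset ℕ} (h : kaylesWeight G = kaylesWeight H) :
    outcome G = outcome H := by
  have hmover : LeftWinsMover G ↔ LeftWinsMover H := by
    rw [(leftWins_iff G).1, (leftWins_iff H).1, h]
  have hwaiter : LeftWinsWaiter G ↔ LeftWinsWaiter H := by
    rw [(leftWins_iff G).2, (leftWins_iff H).2, h]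
  unfold outcome
  rw [propext hmover, propext hwaiter]

end Outcomes

theorem kayles_reduction (n k : ℕ) (h : 3 ≤ n) :
    (n = 3 * k → ∀ X : Multiset ℕ, 0 ∉ X →
      outcome (n ::ₘ X) = outcome (pos k k + X)) ∧
    (n = 3 * k + 1 → ∀ X : Multiset ℕ, 0 ∉ X →
      outcome (n ::ₘ X) = outcome (pos (k + 1) k + X)) ∧
    (n = 3 * k + 2 → ∀ X : Multiset ℕ, 0 ∉ X →
      outcome (n ::ₘ X) = outcome (pos k (k + 1) + X)) := by
  refine ⟨?_, ?_, ?_⟩ <;> rintro rfl X - <;> apply outcome_eq_of_kaylesWeight_eq <;>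
    simp only [kaylesWeight_cons, kaylesWeight_add, kaylesWeight_pos, stripWeight] <;>
    split_ifs <;> omega
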